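/- arXiv:1507.01708 — 5 statements merged into one kernel-verified Lean document; each statement's English description precedes it below -/
import Mathlib

section
/- Every well-formed graph schema S is nonempty: there exists a finite data graph G conforming to S with exactly one node per element type of DNorm(S), such that each node of type e=(in,out) has at least one incoming a-edge for each symbol a occurring in in, and at least one outgoing a-edge for each symbol a occurring in out. -/
/-! ### Conflict-free regular expressions over unordered words -/

inductive RE (σ : Type) : Type
  | eps : RE σ
  | sym : σ → RE σ
  | union : RE σ → RE σ → RE σ
  | conc : RE σ → RE σ → RE σ
  | star : σ → RE σ
  | plus : σ → RE σ
  deriving DecidableEq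

def uconc {σ : Type} (L₁ L₂ : Set (Multiset σ)) : Set (Multiset σ) :=
  {w | ∃ w₁ ∈ L₁, ∃ w₂ ∈ L₂, w = w₁ + w₂}

def resem {σ : Type} : RE σ → Set (Multiset σ)
  | .eps => {0}
  | .sym a => {{a}}
  | .union t₁ t₂ => resem t₁ ∪ resem t₂
  | .conc t₁ t₂ => uconc (resem t₁) (resem t₂)
  | .star a => {w | ∃ n : ℕ, w = Multiset.replicate n a}
  | .plus a => {w | ∃ n : ℕ, 1 ≤ n ∧ w = Multiset.replicate n a}

def syms {σ : Type} [DecidableEq σ] : RE σ → Finset σ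
  | .eps => ∅
  | .sym a => {a}
  | .union t₁ t₂ => syms t₁ ∪ syms t₂
  | .conc t₁ t₂ => syms t₁ ∪ syms t₂
  | .star a => {a}
  | .plus a => {a}

def CF {σ : Type} [DecidableEq σ] : RE σ → Prop
  | .union t₁ t₂ => CF t₁ ∧ CF t₂ ∧ Disjoint (syms t₁) (syms t₂)
  | .conc t₁ t₂ => CF t₁ ∧ CF t₂ ∧ Disjoint (syms t₁) (syms t₂)
  | _ => True

def distr {σ : Type} : RE σ → RE σ → RE σ
  | .union A B, C => .union (distr A C) (distr B C)
  | A, .union B C => .union (distr A B) (distr A C)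
  | A, B => .conc A B

def norm {σ : Type} : RE σ → RE σ
  | .eps => .eps
  | .sym a => .sym a
  | .union t₁ t₂ => .union (norm t₁) (norm t₂)
  | .conc t₁ t₂ => distr (norm t₁) (norm t₂)
  | .star a => .star a
  | .plus a => .plus a

/-- The list of union-free clauses of a (normalized) expression. -/
def clauses {σ : Type} : RE σ → List (RE σ)
  | .union t₁ t₂ => clauses t₁ ++ clauses t₂
  | t => [t]

/-- An occurrence of symbol `a` that is *not* under a Kleene star. -/
def occursUnstarred {σ : Type} (a : σ) : RE σ → Prop
  | .eps => False
  | .sym b => b = a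
  | .union t₁ t₂ => occursUnstarred a t₁ ∨ occursUnstarred a t₂
  | .conc t₁ t₂ => occursUnstarred a t₁ ∨ occursUnstarred a t₂
  | .star _ => False
  | .plus b => b = a

/-! ### Graph schemas -/

/-- A schema element: regular expressions for incoming and outgoing edges. -/
abbrev Elem (σ : Type) := RE σ × RE σ

/-- Double normalization: each element is split into one element per pair of
union-free clauses of the DNFs of its `in` and `out` expressions. -/
def DNorm {σ : Type} [DecidableEq σ] (S : Finset (Elem σ)) : Finset (Elem σ) :=
  S.biUnion (fun e => ((clauses (norm e.1)).product (clauses (norm e.2))).toFinset)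

/-- Conditions 1–3 of the definition of graph schemas: symbol closure between
incoming and outgoing expressions, and pairwise disjoint typings. -/
def IsSchema {σ : Type} [DecidableEq σ] (S : Finset (Elem σ)) : Prop :=
  (∀ e ∈ S, CF e.1 ∧ CF e.2) ∧
  (∀ e ∈ S, ∀ a ∈ syms e.1, ∃ e' ∈ S, a ∈ syms e'.2) ∧
  (∀ e ∈ S, ∀ a ∈ syms e.2, ∃ e' ∈ S, a ∈ syms e'.1) ∧
  (∀ e ∈ S, ∀ e' ∈ S, e ≠ e' →
    resem e.1 ∩ resem e'.1 = ∅ ∨ resem e.2 ∩ resem e'.2 = ∅)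

/-- Well-formedness: whenever a symbol occurs in the `out` (resp. `in`)
expressions of two distinct elements of `DNorm S`, every occurrence of it in an
`in` (resp. `out`) expression of `DNorm S` is under a star. -/
def WellFormed {σ : Type} [DecidableEq σ] (S : Finset (Elem σ)) : Prop :=
  (∀ a : σ, (∃ e₁ ∈ DNorm S, ∃ e₂ ∈ DNorm S, e₁ ≠ e₂ ∧
      a ∈ syms e₁.2 ∧ a ∈ syms e₂.2) →
    ∀ e ∈ DNorm S, ¬ occursUnstarred a e.1) ∧
  (∀ a : σ, (∃ e₁ ∈ DNorm S, ∃ e₂ ∈ DNorm S, e₁ ≠ e₂ ∧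
      a ∈ syms e₁.1 ∧ a ∈ syms e₂.1) →
    ∀ e ∈ DNorm S, ¬ occursUnstarred a e.2)

/-! ### Data graphs and conformance -/

def inLabels {V σ : Type} [DecidableEq V] (E : Finset (V × σ × V)) (v : V) :
    Multiset σ :=
  ((E.filter (fun t => t.2.2 = v)).val.map (fun t => t.2.1))

def outLabels {V σ : Type} [DecidableEq V] (E : Finset (V × σ × V)) (v : V) :
    Multiset σ :=
  ((E.filter (fun t => t.1 = v)).val.map (fun t => t.2.1))

/-- A node has type `e` if its incoming/outgoing label multisets belong to the
languages of `e`. -/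
def HasType {V σ : Type} [DecidableEq V] (E : Finset (V × σ × V)) (v : V)
    (e : Elem σ) : Prop :=
  inLabels E v ∈ resem e.1 ∧ outLabels E v ∈ resem e.2

/-- A graph conforms to a schema if every node is typed by some element. -/
def Conforms {V σ : Type} [DecidableEq V] (E : Finset (V × σ × V))
    (S : Finset (Elem σ)) : Prop :=
  ∀ v : V, ∃ e ∈ S, HasType E v e

/-! ### RPQs, NREs, and their semantics -/

inductive RPQ (σ : Type) : Type
  | eps : RPQ σ
  | sym : σ → RPQ σ
  | union : RPQ σ → RPQ σ → RPQ σ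
  | conc : RPQ σ → RPQ σ → RPQ σ
  | star : RPQ σ → RPQ σ

inductive NRE (σ : Type) : Type
  | eps : NRE σ
  | sym : σ → NRE σ
  | back : σ → NRE σ
  | union : NRE σ → NRE σ → NRE σ
  | conc : NRE σ → NRE σ → NRE σ
  | star : NRE σ → NRE σ
  | test : NRE σ → NRE σ

/-- Composition of binary relations given as sets of pairs. -/
def relComp {α : Type} (R₁ R₂ : Set (α × α)) : Set (α × α) :=
  {p | ∃ m, (p.1, m) ∈ R₁ ∧ (m, p.2) ∈ R₂}

/-- `n`-fold composition, with the full identity relation as base. -/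
def powRel {α : Type} (R : Set (α × α)) : ℕ → Set (α × α)
  | 0 => {p | p.1 = p.2}
  | n + 1 => relComp (powRel R n) R

/-- Semantics of RPQs on a graph with edge set `E`. -/
def rpqSem {V σ : Type} (E : Set (V × σ × V)) : RPQ σ → Set (V × V)
  | .eps => {p | p.1 = p.2}
  | .sym a => {p | (p.1, a, p.2) ∈ E}
  | .union r₁ r₂ => rpqSem E r₁ ∪ rpqSem E r₂
  | .conc r₁ r₂ => relComp (rpqSem E r₁) (rpqSem E r₂)
  | .star r => ⋃ i : ℕ, powRel (rpqSem E r) i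

/-- Semantics of NREs on a graph with edge set `E`. -/
def nreSem {V σ : Type} (E : Set (V × σ × V)) : NRE σ → Set (V × V)
  | .eps => {p | p.1 = p.2}
  | .sym a => {p | (p.1, a, p.2) ∈ E}
  | .back a => {p | (p.2, a, p.1) ∈ E}
  | .union n₁ n₂ => nreSem E n₁ ∪ nreSem E n₂
  | .conc n₁ n₂ => relComp (nreSem E n₁) (nreSem E n₂)
  | .star n => ⋃ i : ℕ, powRel (nreSem E n) i
  | .test n => {p | p.1 = p.2 ∧ ∃ v, (p.1, v) ∈ nreSem E n}

/-! ### Type inference -/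

/-- The identity relation on the elements of a schema. -/
def relId {σ : Type} (S : Finset (Elem σ)) : Set (Elem σ × Elem σ) :=
  {p | p.1 ∈ S ∧ p.1 = p.2}

/-- `n`-fold composition with the identity on `S` as base. -/
def spowRel {σ : Type} (S : Finset (Elem σ)) (R : Set (Elem σ × Elem σ)) :
    ℕ → Set (Elem σ × Elem σ)
  | 0 => relId S
  | n + 1 => relComp (spowRel S R n) R

/-- Type inference for RPQs. -/
def rpqInf {σ : Type} [DecidableEq σ] (S : Finset (Elem σ)) :
    RPQ σ → Set (Elem σ × Elem σ)
  | .eps => relId S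
  | .sym a => {p | p.1 ∈ S ∧ p.2 ∈ S ∧ a ∈ syms p.1.2 ∧ a ∈ syms p.2.1}
  | .union r₁ r₂ => rpqInf S r₁ ∪ rpqInf S r₂
  | .conc r₁ r₂ => relComp (rpqInf S r₁) (rpqInf S r₂)
  | .star r => ⋃ i : ℕ, spowRel S (rpqInf S r) i

/-- `first` of a set of element pairs. -/
def firstOf {σ : Type} (R : Set (Elem σ × Elem σ)) : Set (Elem σ) :=
  {e | ∃ e', (e, e') ∈ R}

/-- Type inference for NREs. -/
def nreInf {σ : Type} [DecidableEq σ] (S : Finset (Elem σ)) :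
    NRE σ → Set (Elem σ × Elem σ)
  | .eps => relId S
  | .sym a => {p | p.1 ∈ S ∧ p.2 ∈ S ∧ a ∈ syms p.1.2 ∧ a ∈ syms p.2.1}
  | .back a => {p | p.1 ∈ S ∧ p.2 ∈ S ∧ a ∈ syms p.1.1 ∧ a ∈ syms p.2.2}
  | .union n₁ n₂ => nreInf S n₁ ∪ nreInf S n₂
  | .conc n₁ n₂ => relComp (nreInf S n₁) (nreInf S n₂)
  | .star n => ⋃ i : ℕ, spowRel S (nreInf S n) i
  | .test n => {p | p.1 ∈ firstOf (nreInf S n) ∧ p.2 ∈ firstOf (nreInf S n)}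

/-! ### Paths -/

/-- `GConnects E p u v`: path `p` (a word over `σ`) connects node `u` to `v`. -/
inductive GConnects {V σ : Type} (E : Set (V × σ × V)) : List σ → V → V → Prop
  | nil (u : V) : GConnects E [] u u
  | cons {u u' v : V} {a : σ} {p : List σ} :
      (u, a, u') ∈ E → GConnects E p u' v → GConnects E (a :: p) u v

/-- The language of paths that can match an RPQ. -/
def pathsOf {σ : Type} : RPQ σ → Set (List σ)
  | .eps => {[]}
  | .sym a => {[a]}
  | .union q₁ q₂ => pathsOf q₁ ∪ pathsOf q₂
  | .conc q₁ q₂ => {p | ∃ p₁ ∈ pathsOf q₁, ∃ p₂ ∈ pathsOf q₂, p = p₁ ++ p₂}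
  | .star q => {p | ∃ l : List (List σ), (∀ x ∈ l, x ∈ pathsOf q) ∧ p = l.flatten}

/-- `SConnects S p e₁ e₂`: path `p` connects schema element `e₁` to `e₂` over `S`. -/
inductive SConnects {σ : Type} [DecidableEq σ] (S : Finset (Elem σ)) :
    List σ → Elem σ → Elem σ → Prop
  | nil (e : Elem σ) : SConnects S [] e e
  | cons {e₀ e eₜ : Elem σ} {a : σ} {p : List σ} :
      e ∈ S → a ∈ syms e₀.2 → a ∈ syms e.1 →
      SConnects S p e eₜ → SConnects S (a :: p) e₀ eₜ

/-- The edge relation of a finite graph, as a set. -/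
def edgeSet {V σ : Type} (E : Finset (V × σ × V)) : Set (V × σ × V) := ↑E

section Aux

variable {σ : Type}

/-- Union-free expressions. -/
def UF : RE σ → Prop
  | .union _ _ => False
  | .conc t₁ t₂ => UF t₁ ∧ UF t₂
  | _ => True

lemma clauses_ne_nil (t : RE σ) : clauses t ≠ [] := by
  induction t <;> simp_all [clauses]

lemma clauses_distr (A B : RE σ) :
    ∀ c ∈ clauses (distr A B), ∃ c₁ ∈ clauses A, ∃ c₂ ∈ clauses B, c = .conc c₁ c₂ := by
  induction A, B using distr.induct with
  | case1 A B C ih1 ih2 =>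
    intro c hc
    simp only [distr, clauses, List.mem_append] at hc ⊢
    rcases hc with hc | hc
    · obtain ⟨c₁, h₁, c₂, h₂, rfl⟩ := ih1 c hc
      exact ⟨c₁, Or.inl h₁, c₂, h₂, rfl⟩
    · obtain ⟨c₁, h₁, c₂, h₂, rfl⟩ := ih2 c hc
      exact ⟨c₁, Or.inr h₁, c₂, h₂, rfl⟩
  | case2 A B C hA ih1 ih2 =>
    intro c hc
    rw [distr] at hc
    · simp only [clauses, List.mem_append] at hc
      rcases hc with hc | hc
      · obtain ⟨c₁, h₁, c₂, h₂, rfl⟩ := ih1 c hc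
        exact ⟨c₁, h₁, c₂, by simp [clauses, h₂], rfl⟩
      · obtain ⟨c₁, h₁, c₂, h₂, rfl⟩ := ih2 c hc
        exact ⟨c₁, h₁, c₂, by simp [clauses, h₂], rfl⟩
    · exact hA
  | case3 A B hA hB =>
    intro c hc
    rw [distr] at hc
    · cases A <;> cases B <;> first
        | (exact absurd rfl (by solve_by_elim))
        | (simp only [clauses, List.mem_singleton] at hc
           exact ⟨_, by simp [clauses], _, by simp [clauses], hc⟩)
    · exact hA
    · exact hB

end Aux
section Aux2

variable {σ : Type} [DecidableEq σ]

lemma syms_distr (A B : RE σ) : syms (distr A B) = syms A ∪ syms B := by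
  induction A, B using distr.induct with
  | case1 A B C ih1 ih2 =>
    simp only [distr, syms, ih1, ih2]
    ext x; simp; tauto
  | case2 A B C hA ih1 ih2 =>
    rw [distr]
    · simp only [syms, ih1, ih2]
      ext x; simp; tauto
    · exact hA
  | case3 A B hA hB =>
    rw [distr]
    · rfl
    · exact hA
    · exact hB

lemma syms_norm (t : RE σ) : syms (_root_.norm t) = syms t := by
  induction t <;> simp_all [_root_.norm, syms, syms_distr]

lemma mem_syms_iff_clauses (t : RE σ) (a : σ) :
    a ∈ syms t ↔ ∃ c ∈ clauses t, a ∈ syms c := by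
  induction t with
  | union t₁ t₂ ih₁ ih₂ =>
    simp only [syms, clauses, List.mem_append, Finset.mem_union, ih₁, ih₂]
    constructor
    · rintro (⟨c, h, ha⟩ | ⟨c, h, ha⟩)
      · exact ⟨c, Or.inl h, ha⟩
      · exact ⟨c, Or.inr h, ha⟩
    · rintro ⟨c, h | h, ha⟩
      · exact Or.inl ⟨c, h, ha⟩
      · exact Or.inr ⟨c, h, ha⟩
  | eps => simp [syms, clauses]
  | sym b => simp [syms, clauses]
  | conc t₁ t₂ ih₁ ih₂ => simp [syms, clauses]
  | star b => simp [syms, clauses]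
  | plus b => simp [syms, clauses]

omit [DecidableEq σ] in
lemma uconc_mono {L₁ L₂ M₁ M₂ : Set (Multiset σ)} (h₁ : L₁ ⊆ M₁) (h₂ : L₂ ⊆ M₂) :
    uconc L₁ L₂ ⊆ uconc M₁ M₂ := by
  rintro w ⟨w₁, hw₁, w₂, hw₂, rfl⟩
  exact ⟨w₁, h₁ hw₁, w₂, h₂ hw₂, rfl⟩

omit [DecidableEq σ] in
lemma resem_clause_subset (t : RE σ) : ∀ c ∈ clauses (_root_.norm t), resem c ⊆ resem t := by
  induction t with
  | union t₁ t₂ ih₁ ih₂ =>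
    intro c hc
    simp only [_root_.norm, clauses, List.mem_append] at hc
    rcases hc with hc | hc
    · exact (ih₁ c hc).trans (Set.subset_union_left)
    · exact (ih₂ c hc).trans (Set.subset_union_right)
  | conc t₁ t₂ ih₁ ih₂ =>
    intro c hc
    obtain ⟨c₁, h₁, c₂, h₂, rfl⟩ := clauses_distr _ _ c hc
    exact uconc_mono (ih₁ c₁ h₁) (ih₂ c₂ h₂)
  | eps => intro c hc; simp_all [_root_.norm, clauses]
  | sym b => intro c hc; simp_all [_root_.norm, clauses]
  | star b => intro c hc; simp_all [_root_.norm, clauses]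
  | plus b => intro c hc; simp_all [_root_.norm, clauses]

lemma clause_props (t : RE σ) (hcf : CF t) :
    ∀ c ∈ clauses (_root_.norm t), UF c ∧ CF c ∧ syms c ⊆ syms t := by
  induction t with
  | union t₁ t₂ ih₁ ih₂ =>
    intro c hc
    simp only [_root_.norm, clauses, List.mem_append] at hc
    obtain ⟨h₁, h₂, hd⟩ := hcf
    rcases hc with hc | hc
    · obtain ⟨u, f, s⟩ := ih₁ h₁ c hc
      exact ⟨u, f, s.trans (Finset.subset_union_left)⟩
    · obtain ⟨u, f, s⟩ := ih₂ h₂ c hc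
      exact ⟨u, f, s.trans (Finset.subset_union_right)⟩
  | conc t₁ t₂ ih₁ ih₂ =>
    intro c hc
    obtain ⟨h₁, h₂, hd⟩ := hcf
    obtain ⟨c₁, hc₁, c₂, hc₂, rfl⟩ := clauses_distr _ _ c hc
    obtain ⟨u₁, f₁, s₁⟩ := ih₁ h₁ c₁ hc₁
    obtain ⟨u₂, f₂, s₂⟩ := ih₂ h₂ c₂ hc₂
    refine ⟨⟨u₁, u₂⟩, ⟨f₁, f₂, ?_⟩, ?_⟩
    · exact Finset.disjoint_of_subset_left s₁ (Finset.disjoint_of_subset_right s₂ hd)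
    · show syms c₁ ∪ syms c₂ ⊆ syms t₁ ∪ syms t₂
      exact Finset.union_subset_union s₁ s₂
  | eps => intro c hc; simp_all [_root_.norm, clauses]; simp [UF, CF]
  | sym b => intro c hc; simp_all [_root_.norm, clauses]; simp [UF, CF]
  | star b => intro c hc; simp_all [_root_.norm, clauses]; simp [UF, CF]
  | plus b => intro c hc; simp_all [_root_.norm, clauses]; simp [UF, CF]

end Aux2
section Aux3

variable {σ : Type} [DecidableEq σ]

lemma mem_resem_of_counts :
    ∀ c : RE σ, UF c → CF c → ∀ w : Multiset σ,
    (∀ a ∈ w, a ∈ syms c) →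
    (∀ a ∈ syms c, 1 ≤ w.count a) →
    (∀ a ∈ syms c, w.count a = 1 ∨ ¬ occursUnstarred a c) →
    w ∈ resem c := by
  intro c
  induction c with
  | eps =>
    intro _ _ w h1 _ _
    have : w = 0 := Multiset.eq_zero_of_forall_notMem (fun a ha => by
      simpa [syms] using h1 a ha)
    simp [resem, this]
  | sym b =>
    intro _ _ w h1 h2 h3
    have hall : ∀ a ∈ w, a = b := fun a ha => by simpa [syms] using h1 a ha
    have hc1 : w.count b = 1 := by
      rcases h3 b (by simp [syms]) with h | h
      · exact h
      · exact absurd (show occursUnstarred b (RE.sym b) from rfl) h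
    have hcard : w.card = w.count b := ((Multiset.count_eq_card).2
      (fun a ha => (hall a ha).symm)).symm
    have : w = Multiset.replicate 1 b := by
      rw [Multiset.eq_replicate]
      exact ⟨by omega, hall⟩
    simp only [resem, this, Multiset.replicate_one, Set.mem_singleton_iff]
  | union t₁ t₂ ih₁ ih₂ => intro h; exact absurd h (by simp [UF])
  | conc t₁ t₂ ih₁ ih₂ =>
    intro hu hc w h1 h2 h3
    obtain ⟨hu₁, hu₂⟩ := hu
    obtain ⟨hc₁, hc₂, hd⟩ := hc
    set w₁ := w.filter (fun a => a ∈ syms t₁) with hw₁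
    set w₂ := w.filter (fun a => a ∉ syms t₁) with hw₂
    have hsplit : w₁ + w₂ = w := Multiset.filter_add_not _ w
    refine ⟨w₁, ?_, w₂, ?_, hsplit.symm⟩
    · refine ih₁ hu₁ hc₁ w₁ ?_ ?_ ?_
      · intro a ha
        exact (Multiset.mem_filter.1 ha).2
      · intro a ha
        rw [hw₁, Multiset.count_filter, if_pos ha]
        exact h2 a (Finset.mem_union_left _ ha)
      · intro a ha
        rw [hw₁, Multiset.count_filter, if_pos ha]
        rcases h3 a (Finset.mem_union_left _ ha) with h | h
        · exact Or.inl h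
        · exact Or.inr (fun hh => h (Or.inl hh))
    · refine ih₂ hu₂ hc₂ w₂ ?_ ?_ ?_
      · intro a ha
        have hm := Multiset.mem_filter.1 ha
        have := h1 a hm.1
        simp only [syms, Finset.mem_union] at this
        tauto
      · intro a ha
        have hna : a ∉ syms t₁ := Finset.disjoint_right.1 hd ha
        rw [hw₂, Multiset.count_filter, if_pos hna]
        exact h2 a (Finset.mem_union_right _ ha)
      · intro a ha
        have hna : a ∉ syms t₁ := Finset.disjoint_right.1 hd ha
        rw [hw₂, Multiset.count_filter, if_pos hna]
        rcases h3 a (Finset.mem_union_right _ ha) with h | h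
        · exact Or.inl h
        · exact Or.inr (fun hh => h (Or.inr hh))
  | star b =>
    intro _ _ w h1 _ _
    have hall : ∀ a ∈ w, a = b := fun a ha => by simpa [syms] using h1 a ha
    have hcard : w.card = w.count b := ((Multiset.count_eq_card).2
      (fun a ha => (hall a ha).symm)).symm
    exact ⟨w.count b, by rw [Multiset.eq_replicate]; exact ⟨hcard, hall⟩⟩
  | plus b =>
    intro _ _ w h1 h2 _
    have hall : ∀ a ∈ w, a = b := fun a ha => by simpa [syms] using h1 a ha
    have hcard : w.card = w.count b := ((Multiset.count_eq_card).2
      (fun a ha => (hall a ha).symm)).symm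
    exact ⟨w.count b, h2 b (by simp [syms]),
      by rw [Multiset.eq_replicate]; exact ⟨hcard, hall⟩⟩

lemma mem_DNorm_iff {S : Finset (Elem σ)} {x : Elem σ} :
    x ∈ DNorm S ↔ ∃ e ∈ S, x.1 ∈ clauses (_root_.norm e.1) ∧
      x.2 ∈ clauses (_root_.norm e.2) := by
  constructor
  · intro hx
    obtain ⟨e, he, hmem⟩ := Finset.mem_biUnion.1 hx
    rw [List.mem_toFinset] at hmem
    obtain ⟨h1, h2⟩ := List.pair_mem_product.1 (by
      have : (x.1, x.2) ∈ (clauses (_root_.norm e.1)).product (clauses (_root_.norm e.2)) := by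
        simpa using hmem
      exact this)
    exact ⟨e, he, h1, h2⟩
  · rintro ⟨e, he, h1, h2⟩
    refine Finset.mem_biUnion.2 ⟨e, he, ?_⟩
    rw [List.mem_toFinset]
    have : (x.1, x.2) ∈ (clauses (_root_.norm e.1)).product (clauses (_root_.norm e.2)) :=
      List.pair_mem_product.2 ⟨h1, h2⟩
    simpa using this

/-- For any symbol in the in-part of a DNorm element, some DNorm element has
it in its out-part. -/
lemma exists_out_elem {S : Finset (Elem σ)} (hS : IsSchema S) {c : Elem σ}
    (hc : c ∈ DNorm S) {a : σ} (ha : a ∈ syms c.1) :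
    ∃ d ∈ DNorm S, a ∈ syms d.2 := by
  obtain ⟨e, he, h1, h2⟩ := mem_DNorm_iff.1 hc
  have hsub := (clause_props e.1 (hS.1 e he).1 c.1 h1).2.2
  obtain ⟨e', he', ha'⟩ := hS.2.1 e he a (hsub ha)
  have : a ∈ syms (_root_.norm e'.2) := by rw [syms_norm]; exact ha'
  rw [mem_syms_iff_clauses] at this
  obtain ⟨c₂, hc₂, hac₂⟩ := this
  obtain ⟨c₁, hc₁⟩ := List.exists_mem_of_ne_nil _ (clauses_ne_nil (_root_.norm e'.1))
  exact ⟨(c₁, c₂), mem_DNorm_iff.2 ⟨e', he', hc₁, hc₂⟩, hac₂⟩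

lemma exists_in_elem {S : Finset (Elem σ)} (hS : IsSchema S) {c : Elem σ}
    (hc : c ∈ DNorm S) {a : σ} (ha : a ∈ syms c.2) :
    ∃ d ∈ DNorm S, a ∈ syms d.1 := by
  obtain ⟨e, he, h1, h2⟩ := mem_DNorm_iff.1 hc
  have hsub := (clause_props e.2 (hS.1 e he).2 c.2 h2).2.2
  obtain ⟨e', he', ha'⟩ := hS.2.2.1 e he a (hsub ha)
  have : a ∈ syms (_root_.norm e'.1) := by rw [syms_norm]; exact ha'
  rw [mem_syms_iff_clauses] at this
  obtain ⟨c₁, hc₁, hac₁⟩ := this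
  obtain ⟨c₂, hc₂⟩ := List.exists_mem_of_ne_nil _ (clauses_ne_nil (_root_.norm e'.2))
  exact ⟨(c₁, c₂), mem_DNorm_iff.2 ⟨e', he', hc₁, hc₂⟩, hac₁⟩

end Aux3
section Aux4

variable {V σ : Type} [DecidableEq V] [DecidableEq σ] [Fintype V]

/-- The canonical complete edge set: an `a`-edge from `u` to `v` whenever
`a` is an out-symbol of `u` and an in-symbol of `v`. -/
def bigE (fo fi : V → Finset σ) : Finset (V × σ × V) :=
  Finset.univ.biUnion fun u => Finset.univ.biUnion fun v =>
    ((fo u ∩ fi v).image fun a => (u, a, v))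

lemma mem_bigE {fo fi : V → Finset σ} (t : V × σ × V) :
    t ∈ bigE fo fi ↔ t.2.1 ∈ fo t.1 ∧ t.2.1 ∈ fi t.2.2 := by
  obtain ⟨u, a, v⟩ := t
  simp only [bigE, Finset.mem_biUnion, Finset.mem_univ, true_and, Finset.mem_image,
    Finset.mem_inter]
  constructor
  · rintro ⟨u', v', b, ⟨h1, h2⟩, heq⟩
    obtain ⟨rfl, rfl, rfl⟩ : u' = u ∧ b = a ∧ v' = v := by
      simpa [Prod.ext_iff] using heq
    exact ⟨h1, h2⟩
  · rintro ⟨h1, h2⟩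
    exact ⟨u, v, a, ⟨h1, h2⟩, rfl⟩

lemma filter_in_bigE (fo fi : V → Finset σ) (v : V) (a : σ) :
    ((bigE fo fi).filter fun t => a = t.2.1 ∧ t.2.2 = v) =
      if a ∈ fi v then (Finset.univ.filter fun u => a ∈ fo u).image
        (fun u => (u, a, v)) else ∅ := by
  ext ⟨u, b, w⟩
  rw [Finset.mem_filter, mem_bigE]
  split_ifs with h
  · simp only [Finset.mem_image, Finset.mem_filter, Finset.mem_univ, true_and]
    constructor
    · rintro ⟨⟨h1, h2⟩, rfl, rfl⟩
      exact ⟨u, h1, rfl⟩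
    · rintro ⟨u', hu', heq⟩
      obtain ⟨rfl, rfl, rfl⟩ : u' = u ∧ a = b ∧ v = w := by
        simpa [Prod.ext_iff] using heq
      exact ⟨⟨hu', h⟩, rfl, rfl⟩
  · simp only [Finset.notMem_empty, iff_false]
    rintro ⟨⟨h1, h2⟩, rfl, rfl⟩
    exact h h2

lemma filter_out_bigE (fo fi : V → Finset σ) (v : V) (a : σ) :
    ((bigE fo fi).filter fun t => a = t.2.1 ∧ t.1 = v) =
      if a ∈ fo v then (Finset.univ.filter fun u => a ∈ fi u).image
        (fun u => (v, a, u)) else ∅ := by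
  ext ⟨u, b, w⟩
  rw [Finset.mem_filter, mem_bigE]
  split_ifs with h
  · simp only [Finset.mem_image, Finset.mem_filter, Finset.mem_univ, true_and]
    constructor
    · rintro ⟨⟨h1, h2⟩, rfl, rfl⟩
      exact ⟨w, h2, rfl⟩
    · rintro ⟨u', hu', heq⟩
      obtain ⟨rfl, rfl, rfl⟩ : v = u ∧ a = b ∧ u' = w := by
        simpa [Prod.ext_iff] using heq
      exact ⟨⟨h, hu'⟩, rfl, rfl⟩
  · simp only [Finset.notMem_empty, iff_false]
    rintro ⟨⟨h1, h2⟩, rfl, rfl⟩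
    exact h h1

lemma count_in_bigE (fo fi : V → Finset σ) (v : V) (a : σ) :
    (inLabels (bigE fo fi) v).count a =
      if a ∈ fi v then (Finset.univ.filter fun u => a ∈ fo u).card else 0 := by
  rw [inLabels, Multiset.count_map]
  have h1 : Multiset.filter (fun t => a = t.2.1)
        (((bigE fo fi).filter fun t => t.2.2 = v)).val
      = (((bigE fo fi).filter fun t => a = t.2.1 ∧ t.2.2 = v)).val := by
    rw [Finset.filter_val, Finset.filter_val, Multiset.filter_filter]
  rw [h1, ← Finset.card_def, filter_in_bigE]
  split_ifs with h
  · rw [Finset.card_image_of_injective]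
    intro x y hxy
    exact congrArg Prod.fst hxy
  · simp

lemma count_out_bigE (fo fi : V → Finset σ) (v : V) (a : σ) :
    (outLabels (bigE fo fi) v).count a =
      if a ∈ fo v then (Finset.univ.filter fun u => a ∈ fi u).card else 0 := by
  rw [outLabels, Multiset.count_map]
  have h1 : Multiset.filter (fun t => a = t.2.1)
        (((bigE fo fi).filter fun t => t.1 = v)).val
      = (((bigE fo fi).filter fun t => a = t.2.1 ∧ t.1 = v)).val := by
    rw [Finset.filter_val, Finset.filter_val, Multiset.filter_filter]
  rw [h1, ← Finset.card_def, filter_out_bigE]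
  split_ifs with h
  · rw [Finset.card_image_of_injective]
    intro x y hxy
    exact congrArg (fun t => t.2.2) hxy
  · simp

end Aux4

/-- Every well-formed graph schema is nonempty: there is a finite conforming
graph with exactly one node per element type of `DNorm S`, such that each node
realizes its own element type and has an incoming (resp. outgoing) `a`-edge for
every symbol `a` of the `in` (resp. `out`) expression of its type. -/
theorem wellFormed_schema_nonempty {σ : Type} [DecidableEq σ]
    (S : Finset (Elem σ)) (hS : IsSchema S) (hwf : WellFormed S) :
    ∃ E : Finset ({x // x ∈ DNorm S} × σ × {x // x ∈ DNorm S}),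
      Conforms E S ∧
      ∀ v : {x // x ∈ DNorm S},
        HasType E v v.1 ∧
        (∀ a ∈ syms v.1.1, ∃ u, (u, a, v) ∈ E) ∧
        (∀ a ∈ syms v.1.2, ∃ u, (v, a, u) ∈ E) := by
  classical
  set E : Finset ({x // x ∈ DNorm S} × σ × {x // x ∈ DNorm S}) :=
    bigE (fun u => syms u.1.2) (fun u => syms u.1.1) with hE
  have houtpos : ∀ (a : σ) (v : {x // x ∈ DNorm S}), a ∈ syms v.1.1 →
      0 < (Finset.univ.filter fun u : {x // x ∈ DNorm S} => a ∈ syms u.1.2).card := by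
    intro a v ha
    obtain ⟨d, hd, had⟩ := exists_out_elem hS v.2 ha
    exact Finset.card_pos.2 ⟨⟨d, hd⟩, by simp [had]⟩
  have hinpos : ∀ (a : σ) (v : {x // x ∈ DNorm S}), a ∈ syms v.1.2 →
      0 < (Finset.univ.filter fun u : {x // x ∈ DNorm S} => a ∈ syms u.1.1).card := by
    intro a v ha
    obtain ⟨d, hd, had⟩ := exists_in_elem hS v.2 ha
    exact Finset.card_pos.2 ⟨⟨d, hd⟩, by simp [had]⟩
  have hstar_in : ∀ a : σ,
      2 ≤ (Finset.univ.filter fun u : {x // x ∈ DNorm S} => a ∈ syms u.1.2).card →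
      ∀ v : {x // x ∈ DNorm S}, ¬ occursUnstarred a v.1.1 := by
    intro a h2 v
    obtain ⟨u₁, hu₁, u₂, hu₂, hne⟩ := Finset.one_lt_card.1 h2
    rw [Finset.mem_filter] at hu₁ hu₂
    exact hwf.1 a ⟨u₁.1, u₁.2, u₂.1, u₂.2, fun h => hne (Subtype.ext h),
      hu₁.2, hu₂.2⟩ v.1 v.2
  have hstar_out : ∀ a : σ,
      2 ≤ (Finset.univ.filter fun u : {x // x ∈ DNorm S} => a ∈ syms u.1.1).card →
      ∀ v : {x // x ∈ DNorm S}, ¬ occursUnstarred a v.1.2 := by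
    intro a h2 v
    obtain ⟨u₁, hu₁, u₂, hu₂, hne⟩ := Finset.one_lt_card.1 h2
    rw [Finset.mem_filter] at hu₁ hu₂
    exact hwf.2 a ⟨u₁.1, u₁.2, u₂.1, u₂.2, fun h => hne (Subtype.ext h),
      hu₁.2, hu₂.2⟩ v.1 v.2
  have hin : ∀ v : {x // x ∈ DNorm S}, inLabels E v ∈ resem v.1.1 := by
    intro v
    obtain ⟨e, he, hc1, _⟩ := mem_DNorm_iff.1 v.2
    obtain ⟨hu, hcf, _⟩ := clause_props e.1 (hS.1 e he).1 v.1.1 hc1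
    refine mem_resem_of_counts _ hu hcf _ ?_ ?_ ?_
    · intro a ha
      by_contra hna
      have hpos := Multiset.count_pos.2 ha
      rw [hE, count_in_bigE, if_neg hna] at hpos
      omega
    · intro a ha
      rw [hE, count_in_bigE, if_pos ha]
      exact houtpos a v ha
    · intro a ha
      rw [hE, count_in_bigE, if_pos ha]
      rcases Nat.lt_or_ge
        (Finset.univ.filter fun u : {x // x ∈ DNorm S} => a ∈ syms u.1.2).card 2 with h | h
      · exact Or.inl (by have := houtpos a v ha; omega)
      · exact Or.inr (hstar_in a h v)
  have hout : ∀ v : {x // x ∈ DNorm S}, outLabels E v ∈ resem v.1.2 := by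
    intro v
    obtain ⟨e, he, _, hc2⟩ := mem_DNorm_iff.1 v.2
    obtain ⟨hu, hcf, _⟩ := clause_props e.2 (hS.1 e he).2 v.1.2 hc2
    refine mem_resem_of_counts _ hu hcf _ ?_ ?_ ?_
    · intro a ha
      by_contra hna
      have hpos := Multiset.count_pos.2 ha
      rw [hE, count_out_bigE, if_neg hna] at hpos
      omega
    · intro a ha
      rw [hE, count_out_bigE, if_pos ha]
      exact hinpos a v ha
    · intro a ha
      rw [hE, count_out_bigE, if_pos ha]
      rcases Nat.lt_or_ge
        (Finset.univ.filter fun u : {x // x ∈ DNorm S} => a ∈ syms u.1.1).card 2 with h | h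
      · exact Or.inl (by have := hinpos a v ha; omega)
      · exact Or.inr (hstar_out a h v)
  refine ⟨E, ?_, ?_⟩
  · intro v
    obtain ⟨e, he, hc1, hc2⟩ := mem_DNorm_iff.1 v.2
    exact ⟨e, he, resem_clause_subset e.1 v.1.1 hc1 (hin v),
      resem_clause_subset e.2 v.1.2 hc2 (hout v)⟩
  · intro v
    refine ⟨⟨hin v, hout v⟩, ?_, ?_⟩
    · intro a ha
      obtain ⟨d, hd, had⟩ := exists_out_elem hS v.2 ha
      exact ⟨⟨d, hd⟩, (mem_bigE _).2 ⟨had, ha⟩⟩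
    · intro a ha
      obtain ⟨d, hd, had⟩ := exists_in_elem hS v.2 ha
      exact ⟨⟨d, hd⟩, (mem_bigE _).2 ⟨ha, had⟩⟩
end

section
/- Soundness of RPQ type inference: given a well-formed schema S, a graph G conforming to S, and an RPQ q, if the type inference judgment derives S ⊢ q : E, then for every pair (u,v) in the semantics of q on G there exists (e_i, e_j) ∈ E with u of type e_i and v of type e_j. -/
lemma mem_syms_of_mem_resem {σ : Type} [DecidableEq σ] :
    ∀ (r : RE σ) (w : Multiset σ), w ∈ resem r → ∀ a ∈ w, a ∈ syms r := by
  intro r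
  induction r with
  | eps => intro w hw a ha; simp only [resem, Set.mem_singleton_iff] at hw; subst hw; simp at ha
  | sym b =>
      intro w hw a ha
      simp only [resem, Set.mem_singleton_iff] at hw; subst hw
      simp only [Multiset.mem_singleton] at ha; subst ha; simp [syms]
  | union t₁ t₂ ih₁ ih₂ =>
      intro w hw a ha
      rcases hw with h | h
      · exact Finset.mem_union.2 (Or.inl (ih₁ w h a ha))
      · exact Finset.mem_union.2 (Or.inr (ih₂ w h a ha))
  | conc t₁ t₂ ih₁ ih₂ =>
      intro w hw a ha
      obtain ⟨w₁, h₁, w₂, h₂, rfl⟩ := hw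
      rcases Multiset.mem_add.1 ha with h | h
      · exact Finset.mem_union.2 (Or.inl (ih₁ w₁ h₁ a h))
      · exact Finset.mem_union.2 (Or.inr (ih₂ w₂ h₂ a h))
  | star b =>
      intro w hw a ha
      obtain ⟨n, rfl⟩ := hw
      have := Multiset.eq_of_mem_replicate ha
      subst this; simp [syms]
  | plus b =>
      intro w hw a ha
      obtain ⟨n, _, rfl⟩ := hw
      have := Multiset.eq_of_mem_replicate ha
      subst this; simp [syms]

lemma type_unique {V σ : Type} [DecidableEq V] [DecidableEq σ]
    {S : Finset (Elem σ)} (hS : IsSchema S) {E : Finset (V × σ × V)} {v : V}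
    {e e' : Elem σ} (he : e ∈ S) (he' : e' ∈ S)
    (h : HasType E v e) (h' : HasType E v e') : e = e' := by
  by_contra hne
  rcases hS.2.2.2 e he e' he' hne with hd | hd
  · have : inLabels E v ∈ resem e.1 ∩ resem e'.1 := ⟨h.1, h'.1⟩
    rw [hd] at this; exact this
  · have : outLabels E v ∈ resem e.2 ∩ resem e'.2 := ⟨h.2, h'.2⟩
    rw [hd] at this; exact this

lemma spowRel_subset {σ : Type} (S : Finset (Elem σ)) (R : Set (Elem σ × Elem σ))
    (hR : ∀ p ∈ R, p.1 ∈ S ∧ p.2 ∈ S) :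
    ∀ i p, p ∈ spowRel S R i → p.1 ∈ S ∧ p.2 ∈ S := by
  intro i
  induction i with
  | zero => intro p hp; exact ⟨hp.1, hp.2 ▸ hp.1⟩
  | succ n ih =>
      intro p hp
      obtain ⟨m, h₁, h₂⟩ := hp
      exact ⟨(ih _ h₁).1, (hR _ h₂).2⟩

lemma rpqInf_subset {σ : Type} [DecidableEq σ] (S : Finset (Elem σ)) :
    ∀ (q : RPQ σ) p, p ∈ rpqInf S q → p.1 ∈ S ∧ p.2 ∈ S := by
  intro q
  induction q with
  | eps => intro p hp; exact ⟨hp.1, hp.2 ▸ hp.1⟩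
  | sym a => intro p hp; exact ⟨hp.1, hp.2.1⟩
  | union q₁ q₂ ih₁ ih₂ =>
      intro p hp; rcases hp with h | h
      · exact ih₁ p h
      · exact ih₂ p h
  | conc q₁ q₂ ih₁ ih₂ =>
      intro p hp
      obtain ⟨m, h₁, h₂⟩ := hp
      exact ⟨(ih₁ _ h₁).1, (ih₂ _ h₂).2⟩
  | star q ih =>
      intro p hp
      obtain ⟨s, ⟨i, rfl⟩, hp⟩ := hp
      exact spowRel_subset S _ ih i p hp

lemma mem_outLabels {V σ : Type} [DecidableEq V] {E : Finset (V × σ × V)}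
    {u : V} {a : σ} {v : V} (h : (u, a, v) ∈ E) : a ∈ outLabels E u := by
  refine Multiset.mem_map.2 ⟨(u, a, v), ?_, rfl⟩
  simpa [Finset.mem_filter] using h

lemma mem_inLabels {V σ : Type} [DecidableEq V] {E : Finset (V × σ × V)}
    {u : V} {a : σ} {v : V} (h : (u, a, v) ∈ E) : a ∈ inLabels E v := by
  refine Multiset.mem_map.2 ⟨(u, a, v), ?_, rfl⟩
  simpa [Finset.mem_filter] using h

/-- Soundness of RPQ type inference. -/
theorem rpq_inference_sound {V σ : Type} [DecidableEq V] [DecidableEq σ]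
    (S : Finset (Elem σ)) (hS : IsSchema S) (hwf : WellFormed S)
    (E : Finset (V × σ × V)) (hG : Conforms E S) (q : RPQ σ) :
    ∀ u v : V, (u, v) ∈ rpqSem (edgeSet E) q →
      ∃ ee ∈ rpqInf S q, HasType E u ee.1 ∧ HasType E v ee.2 := by
  induction q with
  | eps =>
      intro u v huv
      simp only [rpqSem, Set.mem_setOf_eq] at huv
      subst huv
      obtain ⟨e, heS, het⟩ := hG u
      exact ⟨(e, e), ⟨heS, rfl⟩, het, het⟩
  | sym a =>
      intro u v huv
      have huv : (u, a, v) ∈ E := huv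
      obtain ⟨e₁, he₁S, he₁t⟩ := hG u
      obtain ⟨e₂, he₂S, he₂t⟩ := hG v
      refine ⟨(e₁, e₂), ⟨he₁S, he₂S, ?_, ?_⟩, he₁t, he₂t⟩
      · exact mem_syms_of_mem_resem e₁.2 _ he₁t.2 a (mem_outLabels huv)
      · exact mem_syms_of_mem_resem e₂.1 _ he₂t.1 a (mem_inLabels huv)
  | union q₁ q₂ ih₁ ih₂ =>
      intro u v huv
      rcases huv with h | h
      · obtain ⟨ee, hee, ht⟩ := ih₁ u v h
        exact ⟨ee, Or.inl hee, ht⟩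
      · obtain ⟨ee, hee, ht⟩ := ih₂ u v h
        exact ⟨ee, Or.inr hee, ht⟩
  | conc q₁ q₂ ih₁ ih₂ =>
      intro u v huv
      obtain ⟨m, h₁, h₂⟩ := huv
      obtain ⟨⟨e₁, e₂⟩, hee, ht₁, ht₂⟩ := ih₁ u m h₁
      obtain ⟨⟨e₂', e₃⟩, hee', ht₂', ht₃⟩ := ih₂ m v h₂
      have hmid : e₂ = e₂' :=
        type_unique hS (rpqInf_subset S q₁ _ hee).2 (rpqInf_subset S q₂ _ hee').1 ht₂ ht₂'
      subst hmid
      exact ⟨(e₁, e₃), ⟨e₂, hee, hee'⟩, ht₁, ht₃⟩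
  | star q ih =>
      intro u v huv
      simp only [rpqSem, Set.mem_iUnion] at huv
      obtain ⟨i, hi⟩ := huv
      induction i generalizing v with
      | zero =>
          simp only [powRel, Set.mem_setOf_eq] at hi
          subst hi
          obtain ⟨e, heS, het⟩ := hG u
          exact ⟨(e, e), Set.mem_iUnion.2 ⟨0, heS, rfl⟩, het, het⟩
      | succ n ihn =>
          obtain ⟨m, h₁, h₂⟩ := hi
          obtain ⟨⟨e₁, e₂⟩, hee, ht₁, ht₂⟩ := ihn m h₁
          obtain ⟨⟨e₂', e₃⟩, hee', ht₂', ht₃⟩ := ih m v h₂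
          obtain ⟨j, hj⟩ := Set.mem_iUnion.1 hee
          have he₂S : e₂ ∈ S :=
            (spowRel_subset S _ (rpqInf_subset S q) j _ hj).2
          have hmid : e₂ = e₂' :=
            type_unique hS he₂S (rpqInf_subset S q _ hee').1 ht₂ ht₂'
          subst hmid
          exact ⟨(e₁, e₃), Set.mem_iUnion.2 ⟨j + 1, e₂, hj, hee'⟩, ht₁, ht₃⟩
end

section
/- Soundness of NRE type inference: given a well-formed schema S, a conforming graph G, and an NRE n, if S ⊢ n : E, then for every (u,v) ∈ ⟦n⟧_G there is (e_i,e_j) ∈ E with u of type e_i and v of type e_j. -/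
/-- Soundness of NRE type inference. -/
theorem nre_inference_sound {V σ : Type} [DecidableEq V] [DecidableEq σ]
    (S : Finset (Elem σ)) (hS : IsSchema S) (hwf : WellFormed S)
    (E : Finset (V × σ × V)) (hG : Conforms E S) (n : NRE σ) :
    ∀ u v : V, (u, v) ∈ nreSem (edgeSet E) n →
      ∃ ee ∈ nreInf S n, HasType E u ee.1 ∧ HasType E v ee.2  := by
  choose f hfS hfT using hG
  have hout : ∀ (u v : V) (a : σ), (u, a, v) ∈ edgeSet E →
      a ∈ syms (f u).2 ∧ a ∈ syms (f v).1 := by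
    intro u v a hE
    constructor
    · refine mem_syms_of_mem_resem _ _ (hfT u).2 a ?_
      simp only [outLabels, Multiset.mem_map]
      exact ⟨(u, a, v), by simpa [Finset.mem_filter, edgeSet] using hE, rfl⟩
    · refine mem_syms_of_mem_resem _ _ (hfT v).1 a ?_
      simp only [inLabels, Multiset.mem_map]
      exact ⟨(u, a, v), by simpa [Finset.mem_filter, edgeSet] using hE, rfl⟩
  have key : ∀ (m : NRE σ) (u v : V), (u, v) ∈ nreSem (edgeSet E) m →
      (f u, f v) ∈ nreInf S m := by
    intro m
    induction m with
    | eps =>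
      intro u v h
      simp only [nreSem, Set.mem_setOf_eq] at h
      subst h
      exact ⟨hfS u, rfl⟩
    | sym a =>
      intro u v h
      simp only [nreSem, Set.mem_setOf_eq] at h
      obtain ⟨h1, h2⟩ := hout u v a h
      exact ⟨hfS u, hfS v, h1, h2⟩
    | back a =>
      intro u v h
      simp only [nreSem, Set.mem_setOf_eq] at h
      obtain ⟨h1, h2⟩ := hout v u a h
      exact ⟨hfS u, hfS v, h2, h1⟩
    | union n₁ n₂ ih₁ ih₂ =>
      intro u v h
      rcases h with h | h
      · exact Or.inl (ih₁ u v h)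
      · exact Or.inr (ih₂ u v h)
    | conc n₁ n₂ ih₁ ih₂ =>
      intro u v h
      obtain ⟨w, h1, h2⟩ := h
      exact ⟨f w, ih₁ u w h1, ih₂ w v h2⟩
    | star n ih =>
      intro u v h
      simp only [nreSem, Set.mem_iUnion] at h
      obtain ⟨i, hi⟩ := h
      simp only [nreInf, Set.mem_iUnion]
      refine ⟨i, ?_⟩
      induction i generalizing v with
      | zero =>
        simp only [powRel, Set.mem_setOf_eq] at hi
        subst hi
        exact ⟨hfS u, rfl⟩
      | succ i ihh =>
        obtain ⟨w, h1, h2⟩ := hi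
        exact ⟨f w, ihh w h1, ih w v h2⟩
    | test n ih =>
      intro u v h
      obtain ⟨huv, w, hw⟩ := h
      have huv' : u = v := huv
      subst huv'
      exact ⟨⟨f w, ih u w hw⟩, ⟨f w, ih u w hw⟩⟩
  intro u v h
  exact ⟨(f u, f v), key n u v h, hfT u, hfT v⟩
end

section
/- If two nodes u and v of a data graph G are connected by a path p, and p belongs to the path language paths(q) of an RPQ q, then (u,v) is in the semantics ⟦q⟧_G of q on G. -/
lemma GConnects_append_split {V σ : Type} (E : Set (V × σ × V)) :
    ∀ (p₁ p₂ : List σ) (u v : V), GConnects E (p₁ ++ p₂) u v →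
    ∃ m, GConnects E p₁ u m ∧ GConnects E p₂ m v := by
  intro p₁
  induction p₁ with
  | nil => intro p₂ u v h; exact ⟨u, .nil u, h⟩
  | cons a t ih =>
    intro p₂ u v h
    cases h with
    | cons he htail =>
      obtain ⟨m, h1, h2⟩ := ih _ _ _ htail
      exact ⟨m, .cons he h1, h2⟩


lemma powRel_cons {α : Type} (R : Set (α × α)) :
    ∀ (n : ℕ) (u m v : α), (u, m) ∈ R → (m, v) ∈ powRel R n →
    (u, v) ∈ powRel R (n + 1) := by
  intro n
  induction n with
  | zero => intro u m v h1 h2; have : m = v := h2; subst this; exact ⟨u, rfl, h1⟩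
  | succ k ih =>
    intro u m v h1 h2
    obtain ⟨w, hw1, hw2⟩ := h2
    exact ⟨w, ih u m w h1 hw1, hw2⟩

/-- If `u` and `v` are connected by a path `p` and `p ∈ paths(q)`, then
`(u, v)` belongs to the semantics of `q`. -/
theorem connects_paths_mem_sem {V σ : Type} (E : Set (V × σ × V)) (q : RPQ σ)
    (p : List σ) (u v : V) (h₁ : GConnects E p u v) (h₂ : p ∈ pathsOf q) :
    (u, v) ∈ rpqSem E q := by
  induction q generalizing p u v with
  | eps => cases h₂; cases h₁; rfl
  | sym a =>
    cases h₂
    cases h₁ with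
    | cons he ht => cases ht; exact he
  | union q₁ q₂ ih₁ ih₂ =>
    cases h₂ with
    | inl h => exact Or.inl (ih₁ p u v h₁ h)
    | inr h => exact Or.inr (ih₂ p u v h₁ h)
  | conc q₁ q₂ ih₁ ih₂ =>
    obtain ⟨p₁, hp₁, p₂, hp₂, rfl⟩ := h₂
    obtain ⟨m, hm₁, hm₂⟩ := GConnects_append_split E p₁ p₂ u v h₁
    exact ⟨m, ih₁ _ _ _ hm₁ hp₁, ih₂ _ _ _ hm₂ hp₂⟩
  | star q ih =>
    obtain ⟨l, hl, rfl⟩ := h₂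
    simp only [rpqSem, Set.mem_iUnion]
    induction l generalizing u with
    | nil => cases h₁; exact ⟨0, rfl⟩
    | cons x t iht =>
      obtain ⟨m, hm₁, hm₂⟩ := GConnects_append_split E x t.flatten u v h₁
      obtain ⟨n, hn⟩ := iht m (fun y hy => hl y (List.mem_cons_of_mem _ hy)) hm₂
      exact ⟨n + 1, powRel_cons _ n u m v (ih _ _ _ hm₁ (hl x List.mem_cons_self)) hn⟩
end

section
/- If the RPQ type inference judgment derives S ⊢ q : E, then for each pair (e_i, e_j) ∈ E there exists a path p over the schema S connecting e_i to e_j with p ∈ paths(q). -/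
lemma SConnects.append {σ : Type} [DecidableEq σ] {S : Finset (Elem σ)}
    {p₁ p₂ : List σ} {e₁ e₂ e₃ : Elem σ}
    (h₁ : SConnects S p₁ e₁ e₂) (h₂ : SConnects S p₂ e₂ e₃) :
    SConnects S (p₁ ++ p₂) e₁ e₃ := by
  induction h₁ with
  | nil e => simpa using h₂
  | cons hS ha hb _ ih => exact SConnects.cons hS ha hb (ih h₂)

/-- Each inferred pair of schema elements is connected by a schema path
matching the query. -/
theorem inferred_pairs_connected {σ : Type} [DecidableEq σ]
    (S : Finset (Elem σ)) (q : RPQ σ) :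
    ∀ ee ∈ rpqInf S q, ∃ p : List σ, SConnects S p ee.1 ee.2 ∧ p ∈ pathsOf q := by
  induction q with
  | eps =>
    rintro ⟨e₁, e₂⟩ ⟨-, h⟩
    exact ⟨[], by cases h; exact SConnects.nil _, rfl⟩
  | sym a =>
    rintro ⟨e₁, e₂⟩ ⟨-, h₂, ha, hb⟩
    exact ⟨[a], SConnects.cons h₂ ha hb (SConnects.nil _), rfl⟩
  | union q₁ q₂ ih₁ ih₂ =>
    rintro ee (h | h)
    · obtain ⟨p, hc, hp⟩ := ih₁ ee h; exact ⟨p, hc, Or.inl hp⟩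
    · obtain ⟨p, hc, hp⟩ := ih₂ ee h; exact ⟨p, hc, Or.inr hp⟩
  | conc q₁ q₂ ih₁ ih₂ =>
    rintro ⟨e₁, e₂⟩ ⟨m, h₁, h₂⟩
    obtain ⟨p₁, hc₁, hp₁⟩ := ih₁ (e₁, m) h₁
    obtain ⟨p₂, hc₂, hp₂⟩ := ih₂ (m, e₂) h₂
    exact ⟨p₁ ++ p₂, hc₁.append hc₂, p₁, hp₁, p₂, hp₂, rfl⟩
  | star q ih =>
    rintro ⟨e₁, e₂⟩ h
    obtain ⟨n, h⟩ := Set.mem_iUnion.mp h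
    have key : ∀ n (e₁ e₂ : Elem σ), (e₁, e₂) ∈ spowRel S (rpqInf S q) n →
        ∃ l : List (List σ), (∀ x ∈ l, x ∈ pathsOf q) ∧
          SConnects S l.flatten e₁ e₂ := by
      intro n
      induction n with
      | zero =>
        rintro e₁ e₂ ⟨-, h⟩
        exact ⟨[], by simp, by cases h; exact SConnects.nil _⟩
      | succ n ihn =>
        rintro e₁ e₂ ⟨m, h₁, h₂⟩
        obtain ⟨l, hl, hc₁⟩ := ihn e₁ m h₁
        obtain ⟨p₂, hc₂, hp₂⟩ := ih (m, e₂) h₂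
        refine ⟨l ++ [p₂], ?_, ?_⟩
        · intro x hx
          rcases List.mem_append.mp hx with hx | hx
          · exact hl x hx
          · simp at hx; subst hx; exact hp₂
        simpa using hc₁.append hc₂
    obtain ⟨l, hl, hc⟩ := key n e₁ e₂ h
    exact ⟨l.flatten, hc, l, hl, rfl⟩
end
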